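/- arXiv:1307.5505 — 4 statements merged into one kernel-verified Lean document; each statement's English description precedes it below -/
import Mathlib

section
/- Let R be a commutative ring and n ≥ 0. If every flat R-module has cotorsion dimension at most n, then every R-module G has cotorsion dimension at most n. -/
open CategoryTheory

universe u

section Defs

variable (R : Type u) [CommRing R]

/-- A linear map is a pure monomorphism if it is injective and stays injective
after tensoring with any module. -/
def IsPureMono {A B : Type u} [AddCommGroup A] [Module R A] [AddCommGroup B] [Module R B]
    (f : A →ₗ[R] B) : Prop :=
  Function.Injective f ∧
    ∀ (P : Type u) [AddCommGroup P] [Module R P],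
      Function.Injective (LinearMap.rTensor P f)

/-- A module is pure injective if it is injective with respect to pure monomorphisms. -/
def IsPureInjective (E : Type u) [AddCommGroup E] [Module R E] : Prop :=
  ∀ ⦃A B : Type u⦄ [AddCommGroup A] [Module R A] [AddCommGroup B] [Module R B]
    (f : A →ₗ[R] B), IsPureMono R f →
      ∀ g : A →ₗ[R] E, ∃ h : B →ₗ[R] E, h.comp f = g

/-- Vanishing of `Ext^n`. -/
def extVanish (n : ℕ) (M N : Type u) [AddCommGroup M] [Module R M]
    [AddCommGroup N] [Module R N] : Prop :=
  Subsingleton (((Ext R (ModuleCat.{u} R) n).obj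
    (Opposite.op (ModuleCat.of R M))).obj (ModuleCat.of R N))

/-- A module `C` is cotorsion if `Ext¹(F, C) = 0` for every flat module `F`. -/
def IsCotorsion (C : Type u) [AddCommGroup C] [Module R C] : Prop :=
  ∀ (F : Type u) [AddCommGroup F] [Module R F], Module.Flat R F →
    extVanish R 1 F C

/-- Short exact sequence of modules. -/
def IsShortExact {A B C : Type u} [AddCommGroup A] [Module R A] [AddCommGroup B] [Module R B]
    [AddCommGroup C] [Module R C] (f : A →ₗ[R] B) (g : B →ₗ[R] C) : Prop :=
  Function.Injective f ∧ Function.Surjective g ∧ LinearMap.ker g = LinearMap.range f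

/-- Pure short exact sequence. -/
def IsPureShortExact {A B C : Type u} [AddCommGroup A] [Module R A] [AddCommGroup B]
    [Module R B] [AddCommGroup C] [Module R C] (f : A →ₗ[R] B) (g : B →ₗ[R] C) : Prop :=
  IsShortExact R f g ∧
    ∀ (P : Type u) [AddCommGroup P] [Module R P],
      Function.Injective (LinearMap.rTensor P f)

/-- A cotorsion resolution `0 → M → C⁰ → ⋯ → Cⁿ → 0` of length `n`. -/
structure CotorsionResolution (M : Type u) [AddCommGroup M] [Module R M] (n : ℕ) where
  C : ℕ → Type u
  [acg : ∀ i, AddCommGroup (C i)]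
  [mod : ∀ i, Module R (C i)]
  f : M →ₗ[R] C 0
  d : ∀ i, C i →ₗ[R] C (i + 1)
  hf : Function.Injective f
  hd0 : LinearMap.ker (d 0) = LinearMap.range f
  hd : ∀ i, LinearMap.ker (d (i + 1)) = LinearMap.range (d i)
  hcot : ∀ i, IsCotorsion R (C i)
  htail : ∀ i, n < i → Subsingleton (C i)

/-- `M` has cotorsion dimension at most `n`. -/
def cotorsionDimLE (M : Type u) [AddCommGroup M] [Module R M] (n : ℕ) : Prop :=
  Nonempty (CotorsionResolution R M n)

/-- A pure injective resolution `0 → M → E⁰ → ⋯ → Eⁿ → 0` of length `n`,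
pure exact in each degree. -/
structure PureInjectiveResolution (M : Type u) [AddCommGroup M] [Module R M] (n : ℕ) where
  E : ℕ → Type u
  [acg : ∀ i, AddCommGroup (E i)]
  [mod : ∀ i, Module R (E i)]
  f : M →ₗ[R] E 0
  d : ∀ i, E i →ₗ[R] E (i + 1)
  hf : Function.Injective f
  hd0 : LinearMap.ker (d 0) = LinearMap.range f
  hd : ∀ i, LinearMap.ker (d (i + 1)) = LinearMap.range (d i)
  hpinj : ∀ i, IsPureInjective R (E i)
  htail : ∀ i, n < i → Subsingleton (E i)
  pure : ∀ (P : Type u) [AddCommGroup P] [Module R P],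
    Function.Injective (LinearMap.rTensor P f) ∧
    LinearMap.ker (LinearMap.rTensor P (d 0)) = LinearMap.range (LinearMap.rTensor P f) ∧
    ∀ i, LinearMap.ker (LinearMap.rTensor P (d (i + 1))) =
      LinearMap.range (LinearMap.rTensor P (d i))

/-- `M` has pure injective dimension at most `n`. -/
def pureInjDimLE (M : Type u) [AddCommGroup M] [Module R M] (n : ℕ) : Prop :=
  Nonempty (PureInjectiveResolution R M n)

end Defs

/-!
Let `P` be a projective resolution of the flat module `F'`. Kernels of surjections between flat
modules are flat, so the syzygy `Ω = im (P_{n+1} → P_n)` is flat and `Ext^{n+1}(F', Ω) = 0`.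
Computed with `P`, this says that the corestriction `P_{n+1} → Ω` extends over `P_n`. Every
`(n+1)`-cocycle `P_{n+1} → G` factors through `Ω`, hence extends over `P_n` as well, which is
`Ext^{n+1}(F', G) = 0`.
-/

open LinearMap

section Flat

variable {R : Type*} [CommRing R] {A B C : Type*} [AddCommGroup A] [Module R A]
  [AddCommGroup B] [Module R B] [AddCommGroup C] [Module R C]

theorem Module.Flat.lTensor_injective_of_exact [Module.Flat R C] {f : A →ₗ[R] B} {g : B →ₗ[R] C}
    (hf : Function.Injective f) (hfg : Function.Exact f g) (hg : Function.Surjective g)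
    (N : Type*) [AddCommGroup N] [Module R N] :
    Function.Injective (f.lTensor N) :=
  -- a diagram chase against the free presentation `K ↪ (N →₀ R) ↠ N` of `N`
  lTensor_injective_of_exact_of_exact_of_rTensor_injective
    (exact_subtype_ker_map (Finsupp.linearCombination R (id : N → N)))
    (Finsupp.linearCombination_id_surjective R N) hfg hg
    (Module.Flat.rTensor_preserves_injective_linearMap _ (Submodule.injective_subtype _))
    (Module.Flat.lTensor_preserves_injective_linearMap f hf)

theorem Module.Flat.ker_of_surjective [Module.Flat R B] [Module.Flat R C] {g : B →ₗ[R] C}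
    (hg : Function.Surjective g) : Module.Flat R (ker g) := by
  refine Module.Flat.iff_rTensor_preserves_injective_linearMap.mpr fun N N' _ _ _ _ i hi => ?_
  have hcomp : Function.Injective ((ker g).subtype.lTensor N' ∘ₗ i.rTensor (ker g)) := by
    rw [lTensor_comp_rTensor, ← rTensor_comp_lTensor]
    exact (Module.Flat.rTensor_preserves_injective_linearMap i hi).comp
      (Module.Flat.lTensor_injective_of_exact (ker g).injective_subtype
        (exact_subtype_ker_map g) hg N)
  exact Function.Injective.of_comp (f := (ker g).subtype.lTensor N') hcomp

end Flat

theorem LinearMap.exists_comp_eq_of_exact {R : Type*} [Ring R] {X' X Y N : Type*}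
    [AddCommGroup X'] [Module R X'] [AddCommGroup X] [Module R X] [AddCommGroup Y] [Module R Y]
    [AddCommGroup N] [Module R N] {d' : X' →ₗ[R] X} {d : X →ₗ[R] Y} (hd : Function.Exact d' d)
    {g : Y →ₗ[R] range d} (hg : g ∘ₗ d = d.rangeRestrict) {φ : X →ₗ[R] N} (hφ : φ ∘ₗ d' = 0) :
    ∃ ψ : Y →ₗ[R] N, ψ ∘ₗ d = φ := by
  have hker : ker d ≤ ker φ := by
    rw [hd.linearMap_ker_eq, range_le_ker_iff, hφ]
  let φ' : range d →ₗ[R] N := (ker d).liftQ φ hker ∘ₗ d.quotKerEquivRange.symm.toLinearMap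
  refine ⟨φ' ∘ₗ g, ?_⟩
  ext x
  have : d.rangeRestrict x = d.quotKerEquivRange (Submodule.Quotient.mk x) := rfl
  simp [comp_assoc, hg, φ', this]

namespace CategoryTheory.ProjectiveResolution

variable {R : Type u} [CommRing R] {M : ModuleCat.{u} R} (P : ProjectiveResolution M)

theorem function_exact_d (i : ℕ) :
    Function.Exact (P.complex.d (i + 2) (i + 1)).hom (P.complex.d (i + 1) i).hom :=
  LinearMap.exact_iff.mpr (P.exact_succ i).moduleCat_range_eq_ker.symm

instance (i : ℕ) : Module.Flat R (P.complex.X i) := by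
  have : Module.Projective R (P.complex.X i) := (IsProjective.iff_projective _).mpr (P.projective i)
  infer_instance

theorem flat_range_d [Module.Flat R M] (i : ℕ) :
    Module.Flat R (range (P.complex.d (i + 1) i).hom) := by
  induction i with
  | zero =>
    let e := (HomologicalComplex.singleObjXSelf (ComplexShape.down ℕ) 0 M).toLinearEquiv
    have hπ : Function.Surjective (P.π.f 0) := (ModuleCat.epi_iff_surjective _).mp inferInstance
    have hexact : Function.Exact (P.complex.d 1 0).hom (e.toLinearMap ∘ₗ (P.π.f 0).hom) :=
      LinearEquiv.postcomp_exact_iff_exact.mpr (exact_iff.mpr P.exact₀.moduleCat_range_eq_ker.symm)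
    rw [← hexact.linearMap_ker_eq]
    exact Module.Flat.ker_of_surjective (e.surjective.comp hπ)
  | succ i ih =>
    rw [← (P.function_exact_d i).linearMap_ker_eq, ← ker_rangeRestrict]
    exact Module.Flat.ker_of_surjective (surjective_rangeRestrict _)

end CategoryTheory.ProjectiveResolution

theorem extVanish_succ_iff {R : Type u} [CommRing R] {F N : Type u} [AddCommGroup F] [Module R F]
    [AddCommGroup N] [Module R N] (P : ProjectiveResolution (ModuleCat.of R F)) (m : ℕ) :
    extVanish R (m + 1) F N ↔
      ∀ φ : P.complex.X (m + 1) →ₗ[R] N, φ ∘ₗ (P.complex.d (m + 2) (m + 1)).hom = 0 →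
        ∃ ψ : P.complex.X m →ₗ[R] N, ψ ∘ₗ (P.complex.d (m + 1) m).hom = φ := by
  rw [extVanish, ← ModuleCat.isZero_iff_subsingleton, (P.isoExt (m + 1) _).isZero_iff,
    ← HomologicalComplex.exactAt_iff_isZero_homology,
    HomologicalComplex.exactAt_iff' _ m (m + 1) (m + 2) (by simp) (by simp),
    ShortComplex.moduleCat_exact_iff]
  constructor
  · intro h φ hφ
    obtain ⟨ψ, hψ⟩ := h (ModuleCat.ofHom φ) (ModuleCat.hom_ext hφ)
    exact ⟨ψ.hom, congrArg ModuleCat.Hom.hom hψ⟩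
  · intro h φ hφ
    obtain ⟨ψ, hψ⟩ := h φ.hom (congrArg ModuleCat.Hom.hom hφ)
    exact ⟨ModuleCat.ofHom ψ, ModuleCat.hom_ext hψ⟩

/-- if every flat module has cotorsion dimension at most `n`
(i.e. `Ext^{n+1}(F', F) = 0` for all flat `F'`), then every module `G` has
cotorsion dimension at most `n` (i.e. `Ext^{n+1}(F', G) = 0` for all flat `F'`). -/
theorem cotorsionDim_le_of_flat_cotorsionDim_le (R : Type u) [CommRing R] (n : ℕ)
    (hcd : ∀ (F : Type u) [AddCommGroup F] [Module R F], Module.Flat R F →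
      ∀ (F' : Type u) [AddCommGroup F'] [Module R F'], Module.Flat R F' →
        extVanish R (n + 1) F' F) :
    ∀ (G : Type u) [AddCommGroup G] [Module R G],
      ∀ (F' : Type u) [AddCommGroup F'] [Module R F'], Module.Flat R F' →
        extVanish R (n + 1) F' G := by
  intro G _ _ F' _ _ hF'
  obtain ⟨P⟩ := HasProjectiveResolution.out (Z := ModuleCat.of R F')
  have : Module.Flat R (ModuleCat.of R F') := hF'
  have hd := P.function_exact_d n
  obtain ⟨g, hg⟩ := (extVanish_succ_iff P n).mp (hcd _ (P.flat_range_d n) F' hF')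
    (P.complex.d (n + 1) n).hom.rangeRestrict (by ext x; exact hd.apply_apply_eq_zero x)
  exact (extVanish_succ_iff P n).mpr fun _ hφ => exists_comp_eq_of_exact hd hg hφ
end

section
/- Let R be a commutative ring and n ≥ 0. Suppose every flat R-module F satisfies Ext^{n+1}_R(F', F) = 0 for all flat R-modules F'. Then for every R-module G and every flat R-module F', Ext^{n+1}_R(F', G) = 0, provided G admits a short exact sequence 0 → C → P → G → 0 with P flat and C cotorsion. -/
open CategoryTheory

universe u

/-!
For a flat module `F'`, the sequence `0 → C → P → G → 0` gives the exact piece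
`Ext^{n+1}(F', P) → Ext^{n+1}(F', G) → Ext^{n+2}(F', C)` of the long exact sequence. The left
term vanishes by hypothesis. The right one vanishes because `C` is cotorsion: the syzygies of a
flat module are flat (a kernel of a surjection of flat modules is flat), so dimension shifting
reduces `Ext^{k+1}(F', C)` to `Ext¹` of a flat module into `C`.

Both steps are diagram chases in a projective resolution `Q` of the first argument, in which
`Ext^{m+1}(X, Y) = 0` says that every cocycle `Q_{m+1} → Y` factors through `d : Q_{m+1} → Q_m`.
-/

theorem Module.Flat.ker_of_surjective_s7 {R M N : Type*} [CommRing R] [AddCommGroup M]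
    [Module R M] [AddCommGroup N] [Module R N] [Module.Flat R M] [Module.Flat R N]
    (g : M →ₗ[R] N) (hg : Function.Surjective g) : Module.Flat R (LinearMap.ker g) := by
  rw [Module.Flat.iff_rTensor_preserves_injective_linearMap]
  intro A B _ _ _ _ L hL
  have hcomm : L.rTensor M ∘ₗ (LinearMap.ker g).subtype.lTensor A =
      (LinearMap.ker g).subtype.lTensor B ∘ₗ L.rTensor (LinearMap.ker g) := by
    rw [LinearMap.rTensor_comp_lTensor, LinearMap.lTensor_comp_rTensor]
  have hinj := (Module.Flat.rTensor_preserves_injective_linearMap L hL).comp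
    (LinearMap.lTensor_injective_of_exact_of_flat g hg _ (Submodule.injective_subtype _)
      (LinearMap.exact_subtype_ker_map g) A)
  rw [← LinearMap.coe_comp, hcomm, LinearMap.coe_comp] at hinj
  exact hinj.of_comp

theorem IsShortExact.shortExact {R : Type u} [CommRing R] {A B C : Type u} [AddCommGroup A]
    [Module R A] [AddCommGroup B] [Module R B] [AddCommGroup C] [Module R C]
    {f : A →ₗ[R] B} {g : B →ₗ[R] C} (h : IsShortExact R f g) :
    (ShortComplex.moduleCatMk f g
      (LinearMap.exact_iff.mpr h.2.2).linearMap_comp_eq_zero).ShortExact :=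
  ModuleCat.shortComplex_shortExact _ (LinearMap.exact_iff.mpr h.2.2) h.1 h.2.1

namespace CategoryTheory

section Abelian

variable {R : Type*} [Ring R] {𝒞 : Type*} [Category 𝒞] [Abelian 𝒞] [Linear R 𝒞]
  [EnoughProjectives 𝒞]

theorem ProjectiveResolution.subsingleton_ext_succ_iff {X : 𝒞} (Q : ProjectiveResolution X)
    (m : ℕ) (Y : 𝒞) :
    Subsingleton (((Ext R 𝒞 (m + 1)).obj (Opposite.op X)).obj Y) ↔
      ∀ φ : Q.complex.X (m + 1) ⟶ Y, Q.complex.d (m + 2) (m + 1) ≫ φ = 0 →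
        ∃ ψ : Q.complex.X m ⟶ Y, Q.complex.d (m + 1) m ≫ ψ = φ := by
  rw [← ModuleCat.isZero_iff_subsingleton, (Q.isoExt (m + 1) Y).isZero_iff,
    ← HomologicalComplex.exactAt_iff_isZero_homology,
    HomologicalComplex.exactAt_iff' _ m (m + 1) (m + 2) (by simp) (by simp),
    ShortComplex.moduleCat_exact_iff]
  rfl

theorem ShortComplex.ShortExact.subsingleton_ext_succ_X₃ {S : ShortComplex 𝒞}
    (hS : S.ShortExact) {X : 𝒞} {m : ℕ}
    (h₂ : Subsingleton (((Ext R 𝒞 (m + 1)).obj (Opposite.op X)).obj S.X₂))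
    (h₁ : Subsingleton (((Ext R 𝒞 (m + 2)).obj (Opposite.op X)).obj S.X₁)) :
    Subsingleton (((Ext R 𝒞 (m + 1)).obj (Opposite.op X)).obj S.X₃) := by
  let Q : ProjectiveResolution X := projectiveResolution X
  have := hS.mono_f
  have := hS.epi_g
  rw [Q.subsingleton_ext_succ_iff] at h₁ h₂ ⊢
  intro φ hφ
  obtain ⟨φ', hφ'⟩ : ∃ φ' : Q.complex.X (m + 1) ⟶ S.X₂, φ' ≫ S.g = φ :=
    ⟨_, Projective.factorThru_comp φ S.g⟩
  obtain ⟨α, hα⟩ := hS.exact.lift' (Q.complex.d (m + 2) (m + 1) ≫ φ') (by simp [hφ', hφ])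
  obtain ⟨β, hβ⟩ := h₁ α (by simp [← cancel_mono S.f, hα])
  obtain ⟨ψ, hψ⟩ := h₂ (φ' - β ≫ S.f) (by simp [reassoc_of% hβ, hα])
  exact ⟨ψ ≫ S.g, by simp [reassoc_of% hψ, hφ']⟩

end Abelian

namespace ShortComplex.ShortExact

variable {R : Type u} [CommRing R] {S : ShortComplex (ModuleCat.{u} R)}

/-- `S.X₂` is the pushout of `Q₀ ← Q₁ → S.X₁`, that is, the cokernel of `Q₁ → Q₀ × S.X₁`. -/
theorem exists_f_comp_eq_of_d_comp_eq (hS : S.ShortExact) (Q : ProjectiveResolution S.X₃)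
    {f₀ : Q.complex.X 0 ⟶ S.X₂} (hf₀ : f₀ ≫ S.g = Q.π.f 0) {f₁ : Q.complex.X 1 ⟶ S.X₁}
    (hf₁ : f₁ ≫ S.f = Q.complex.d 1 0 ≫ f₀) {Y : ModuleCat.{u} R} (φ : S.X₁ ⟶ Y)
    (β : Q.complex.X 0 ⟶ Y) (hβ : Q.complex.d 1 0 ≫ β = f₁ ≫ φ) :
    ∃ ψ : S.X₂ ⟶ Y, S.f ≫ ψ = φ := by
  have hf₀' (x) : S.g (f₀ x) = Q.π.f 0 x := by rw [← ConcreteCategory.comp_apply, hf₀]; rfl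
  have hf₁' (y) : S.f (f₁ y) = f₀ (Q.complex.d 1 0 y) := by
    rw [← ConcreteCategory.comp_apply, hf₁, ConcreteCategory.comp_apply]
  let T := ShortComplex.mk (X₁ := Q.complex.X 1)
    (ModuleCat.ofHom ((Q.complex.d 1 0).hom.prod (-f₁.hom)))
    (ModuleCat.ofHom (f₀.hom.coprod S.f.hom)) (by ext y; simp [hf₁'])
  have hT : T.Exact := by
    rw [ShortComplex.moduleCat_exact_iff]
    rintro ⟨q, a⟩ hqa
    replace hqa : f₀ q = -S.f a := eq_neg_of_add_eq_zero_left hqa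
    obtain ⟨y, rfl⟩ : ∃ y, Q.complex.d 1 0 y = q :=
      (ShortComplex.moduleCat_exact_iff _).mp Q.exact₀ q ((hf₀' q).symm.trans
        (by rw [hqa, map_neg, ShortComplex.moduleCat_zero_apply, neg_zero]; rfl))
    refine ⟨y, Prod.ext rfl ?_⟩
    show -f₁ y = a
    rw [neg_eq_iff_eq_neg]
    apply hS.moduleCat_injective_f
    rw [hf₁', hqa, map_neg]
  have : Epi T.g := by
    rw [ModuleCat.epi_iff_surjective]
    intro b
    obtain ⟨q, hq⟩ := (ModuleCat.epi_iff_surjective (Q.π.f 0)).mp inferInstance (S.g b)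
    obtain ⟨a, ha⟩ := (ShortComplex.moduleCat_exact_iff _).mp hS.exact (b - f₀ q)
      (by rw [map_sub, hf₀', hq, sub_self])
    refine ⟨(q, a), ?_⟩
    show f₀ q + S.f a = b
    rw [ha, add_sub_cancel]
  refine ⟨hT.desc (ModuleCat.ofHom (β.hom.coprod φ.hom)) ?_, ?_⟩
  · ext y
    show β (Q.complex.d 1 0 y) + φ (-f₁ y) = 0
    rw [map_neg, ← ConcreteCategory.comp_apply, hβ, ConcreteCategory.comp_apply, add_neg_cancel]
  · ext a
    have : S.f a = T.g (0, a) := by simp [T]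
    rw [ConcreteCategory.comp_apply, this, ← ConcreteCategory.comp_apply, hT.g_desc]
    show β 0 + φ a = φ a
    rw [map_zero, zero_add]

theorem exists_f_comp_eq_of_subsingleton_ext_one (hS : S.ShortExact) {Y : ModuleCat.{u} R}
    (hY : Subsingleton (((Ext R (ModuleCat.{u} R) 1).obj (Opposite.op S.X₃)).obj Y))
    (φ : S.X₁ ⟶ Y) : ∃ ψ : S.X₂ ⟶ Y, S.f ≫ ψ = φ := by
  let Q : ProjectiveResolution S.X₃ := projectiveResolution S.X₃
  have := hS.mono_f
  have := hS.epi_g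
  obtain ⟨f₀, hf₀⟩ : ∃ f₀ : Q.complex.X 0 ⟶ S.X₂, f₀ ≫ S.g = Q.π.f 0 :=
    ⟨_, Projective.factorThru_comp _ _⟩
  obtain ⟨f₁, hf₁⟩ := hS.exact.lift' (Q.complex.d 1 0 ≫ f₀)
    (by rw [Category.assoc, hf₀]; exact Q.complex_d_comp_π_f_zero)
  have hdf₁ : Q.complex.d 2 1 ≫ f₁ = 0 := by simp [← cancel_mono S.f, hf₁]
  obtain ⟨β, hβ⟩ := (Q.subsingleton_ext_succ_iff 0 Y).mp hY (f₁ ≫ φ)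
    (by rw [reassoc_of% hdf₁, Limits.zero_comp])
  exact hS.exists_f_comp_eq_of_d_comp_eq Q hf₀ hf₁ φ β hβ

end ShortComplex.ShortExact

theorem ProjectiveResolution.flat_quotient_range_d {R : Type u} [CommRing R]
    {X : ModuleCat.{u} R} [Module.Flat R X] (Q : ProjectiveResolution X) (k : ℕ) :
    Module.Flat R (Q.complex.X k ⧸ LinearMap.range (Q.complex.d (k + 1) k).hom) := by
  induction k with
  | zero =>
    rw [Q.exact₀.moduleCat_range_eq_ker]
    let e : (Q.complex.X 0 ⧸ LinearMap.ker (Q.π.f 0).hom) ≃ₗ[R] X :=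
      LinearMap.quotKerEquivOfSurjective _
        ((ModuleCat.epi_iff_surjective (Q.π.f 0)).mp inferInstance)
    exact Module.Flat.of_linearEquiv e
  | succ k ih =>
    rw [(Q.exact_succ k).moduleCat_range_eq_ker]
    have := Module.Flat.ker_of_surjective_s7 _
      (LinearMap.range (Q.complex.d (k + 1) k).hom).mkQ_surjective
    rw [Submodule.ker_mkQ] at this
    exact Module.Flat.of_linearEquiv (LinearMap.quotKerEquivRange _)

end CategoryTheory

theorem IsCotorsion.extVanish_succ {R : Type u} [CommRing R] {C : Type u} [AddCommGroup C]
    [Module R C] (hC : IsCotorsion R C) {F : Type u} [AddCommGroup F] [Module R F]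
    (hF : Module.Flat R F) (k : ℕ) : extVanish R (k + 1) F C := by
  let Q : ProjectiveResolution (ModuleCat.of R F) := projectiveResolution _
  refine (Q.subsingleton_ext_succ_iff k _).mpr fun φ hφ => ?_
  let d := (Q.complex.d (k + 1) k).hom
  let Z := LinearMap.range d
  have hS : (ShortComplex.moduleCatMk Z.subtype Z.mkQ
      (LinearMap.exact_subtype_mkQ Z).linearMap_comp_eq_zero).ShortExact :=
    ModuleCat.shortComplex_shortExact _ (LinearMap.exact_subtype_mkQ Z) Z.injective_subtype
      Z.mkQ_surjective
  have hker : LinearMap.ker d ≤ LinearMap.ker φ.hom := by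
    rw [← (Q.exact_succ k).moduleCat_range_eq_ker]
    rintro _ ⟨y, rfl⟩
    exact congr($(hφ).hom y)
  obtain ⟨ψ, hψ⟩ := hS.exists_f_comp_eq_of_subsingleton_ext_one
    (hC _ (Q.flat_quotient_range_d k))
    (ModuleCat.ofHom ((LinearMap.ker d).liftQ φ.hom hker ∘ₗ d.quotKerEquivRange.symm))
  refine ⟨ψ, ?_⟩
  ext x
  have := congr($(hψ).hom (⟨d x, LinearMap.mem_range_self d x⟩ : Z))
  rwa [ModuleCat.hom_ofHom, LinearMap.comp_apply, LinearEquiv.coe_coe,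
    LinearMap.quotKerEquivRange_symm_apply_image, Submodule.mkQ_apply,
    Submodule.liftQ_apply] at this

/-- if `Ext^{n+1}(F', F) = 0` for all flat modules `F', F`, then
`Ext^{n+1}(F', G) = 0` for all flat `F'` and all `G` admitting a short exact sequence
`0 → C → P → G → 0` with `P` flat and `C` cotorsion. -/
theorem ext_vanish_of_flat_precover (R : Type u) [CommRing R] (n : ℕ)
    (hyp : ∀ (F : Type u) [AddCommGroup F] [Module R F], Module.Flat R F →
      ∀ (F' : Type u) [AddCommGroup F'] [Module R F'], Module.Flat R F' →
        extVanish R (n + 1) F' F)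
    (G C P : Type u) [AddCommGroup G] [Module R G] [AddCommGroup C] [Module R C]
    [AddCommGroup P] [Module R P]
    (ι : C →ₗ[R] P) (p : P →ₗ[R] G) (hse : IsShortExact R ι p)
    (hP : Module.Flat R P) (hC : IsCotorsion R C) :
    ∀ (F' : Type u) [AddCommGroup F'] [Module R F'], Module.Flat R F' →
      extVanish R (n + 1) F' G := by
  intro F' _ _ hF'
  exact hse.shortExact.subsingleton_ext_succ_X₃ (hyp P hP F' hF') (hC.extVanish_succ hF' (n + 1))
end

section
/- Let R be a commutative ring. If every R-module has pure injective dimension at most n, then every flat R-module has cotorsion dimension at most n. -/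
open CategoryTheory

universe u

/-! A pure injective module `E` is cotorsion. Take a flat module `F` and a projective resolution
`P → F`. Since `F` is flat, `K = ker (P₀ → F) = im (P₁ → P₀)` is a pure submodule of `P₀`. A
1-cocycle `P₁ → E` kills `im (P₂ → P₁) = ker (P₁ → K)`, so it factors through `K`, and pure
injectivity extends it to `P₀`: it is a coboundary, and `Ext¹(F, E) = 0`. Hence every pure injective
resolution is already a cotorsion resolution of the same length. -/

section PureInjective

open LinearMap

variable {R : Type u} [CommRing R]

theorem isPureMono_subtype_ker_of_flat {P F : Type u} [AddCommGroup P] [Module R P]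
    [AddCommGroup F] [Module R F] [Module.Flat R F] (π : P →ₗ[R] F)
    (hπ : Function.Surjective π) : IsPureMono R (ker π).subtype :=
  ⟨Subtype.val_injective, fun Q _ _ => (lTensor_inj_iff_rTensor_inj _ _).mp
    (lTensor_injective_of_exact_of_flat π hπ _ Subtype.val_injective (exact_subtype_ker_map π) Q)⟩

theorem IsPureInjective.exists_comp_eq {E A B : Type u} [AddCommGroup E] [Module R E]
    [AddCommGroup A] [Module R A] [AddCommGroup B] [Module R B] (hE : IsPureInjective R E)
    (d : A →ₗ[R] B) (hd : IsPureMono R (range d).subtype) (φ : A →ₗ[R] E)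
    (hφ : ker d ≤ ker φ) : ∃ ψ : B →ₗ[R] E, ψ ∘ₗ d = φ := by
  let φ' : range d →ₗ[R] E := (ker d).liftQ φ hφ ∘ₗ (quotKerEquivRange d).symm.toLinearMap
  obtain ⟨ψ, hψ⟩ := hE _ hd φ'
  refine ⟨ψ, LinearMap.ext fun a => ?_⟩
  have hφ' : φ' ⟨d a, mem_range_self d a⟩ = φ a := by
    simp [φ', quotKerEquivRange_symm_apply_image]
  rw [← hφ', ← hψ]
  rfl

theorem extVanish_of_exactAt {M N : Type u} [AddCommGroup M] [Module R M]
    [AddCommGroup N] [Module R N] (P : ProjectiveResolution (ModuleCat.of R M)) (n : ℕ)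
    (h : (P.complex.linearYonedaObj R (ModuleCat.of R N)).ExactAt n) : extVanish R n M N :=
  have := ModuleCat.subsingleton_of_isZero
    ((HomologicalComplex.exactAt_iff_isZero_homology _ _).mp h)
  (P.isoExt n (ModuleCat.of R N)).toLinearEquiv.toEquiv.subsingleton

theorem extVanish_one_of_forall_exists_comp_eq {M N : Type u} [AddCommGroup M] [Module R M]
    [AddCommGroup N] [Module R N] (P : ProjectiveResolution (ModuleCat.of R M))
    (h : ∀ φ : P.complex.X 1 ⟶ ModuleCat.of R N, P.complex.d 2 1 ≫ φ = 0 →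
      ∃ ψ, P.complex.d 1 0 ≫ ψ = φ) : extVanish R 1 M N := by
  refine extVanish_of_exactAt P 1 ?_
  rw [HomologicalComplex.exactAt_iff' _ 0 1 2 (by simp) (by simp),
    ShortComplex.moduleCat_exact_iff]
  exact h

theorem IsPureInjective.isCotorsion {E : Type u} [AddCommGroup E] [Module R E]
    (hE : IsPureInjective R E) : IsCotorsion R E := by
  intro F _ _ hF
  let P : ProjectiveResolution (ModuleCat.of R F) := HasProjectiveResolution.out.some
  refine extVanish_one_of_forall_exists_comp_eq P fun φ hφ => ?_
  have hrange : range (P.complex.d 1 0).hom = ker (P.π.f 0).hom :=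
    (ShortComplex.moduleCat_exact_iff_range_eq_ker _).mp P.exact₀
  have hker : ker (P.complex.d 1 0).hom = range (P.complex.d 2 1).hom := by
    have := P.complex_exactAt_succ 0
    rw [HomologicalComplex.exactAt_iff' _ 2 1 0 (by simp) (by simp),
      ShortComplex.moduleCat_exact_iff_range_eq_ker] at this
    exact this.symm
  have hπ : Function.Surjective (P.π.f 0) :=
    (ModuleCat.epi_iff_surjective (P.π.f 0)).mp inferInstance
  obtain ⟨ψ, hψ⟩ := hE.exists_comp_eq (P.complex.d 1 0).hom
    (hrange ▸ @isPureMono_subtype_ker_of_flat _ _ _ F _ _ _ _ hF (P.π.f 0).hom hπ) φ.hom <| by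
      rw [hker]
      rintro _ ⟨x, rfl⟩
      exact congr($hφ x)
  exact ⟨ModuleCat.ofHom ψ, ModuleCat.hom_ext hψ⟩

def PureInjectiveResolution.toCotorsionResolution {M : Type u} [AddCommGroup M] [Module R M]
    {n : ℕ} (E : PureInjectiveResolution R M n) : CotorsionResolution R M n :=
  letI := E.acg
  letI := E.mod
  { E with C := E.E, hcot := fun i => (E.hpinj i).isCotorsion }

theorem pureInjDimLE.cotorsionDimLE {M : Type u} [AddCommGroup M] [Module R M] {n : ℕ}
    (h : pureInjDimLE R M n) : cotorsionDimLE R M n :=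
  h.map PureInjectiveResolution.toCotorsionResolution

end PureInjective

/-- if every module has pure injective dimension at most `n`, then every
flat module has cotorsion dimension at most `n`. -/
theorem flat_cotorsionDim_le_of_pureInjDim_le (R : Type u) [CommRing R] (n : ℕ)
    (hyp : ∀ (M : Type u) [AddCommGroup M] [Module R M], pureInjDimLE R M n) :
    ∀ (F : Type u) [AddCommGroup F] [Module R F], Module.Flat R F →
      cotorsionDimLE R F n :=
  fun F _ _ _ => (hyp F).cotorsionDimLE
end

section
/- Let R be a commutative ring and let 0 → G' → G → G'' → 0 be a short exact sequence of R-modules. Then there exists a short exact sequence 0 → F' → F → F'' → 0 of flat R-modules together with a morphism of short exact sequences (φ', φ, φ'') from it to the given sequence, with φ'' : F'' → G'' surjective and φ : F → G surjective. -/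
open CategoryTheory

universe u

/-- A cover of a short exact sequence `0 → G' → G → G'' → 0` by a short exact sequence
of flat modules, with surjective middle and right vertical maps. -/
structure FlatSESCover (R : Type u) [CommRing R]
    (G' G G'' : Type u) [AddCommGroup G'] [Module R G'] [AddCommGroup G] [Module R G]
    [AddCommGroup G''] [Module R G'']
    (iG : G' →ₗ[R] G) (pG : G →ₗ[R] G'') where
  F' : Type u
  F : Type u
  F'' : Type u
  [acg' : AddCommGroup F']
  [mod' : Module R F']
  [acg : AddCommGroup F]
  [mod : Module R F]
  [acg'' : AddCommGroup F'']
  [mod'' : Module R F'']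
  i : F' →ₗ[R] F
  p : F →ₗ[R] F''
  ses : IsShortExact R i p
  flat' : Module.Flat R F'
  flat : Module.Flat R F
  flat'' : Module.Flat R F''
  φ' : F' →ₗ[R] G'
  φ : F →ₗ[R] G
  φ'' : F'' →ₗ[R] G''
  comm_left : φ.comp i = iG.comp φ'
  comm_right : φ''.comp p = pG.comp φ
  surj_mid : Function.Surjective φ
  surj_right : Function.Surjective φ''

theorem isShortExact_inl_snd {R : Type u} [CommRing R] (M N : Type u) [AddCommGroup M]
    [Module R M] [AddCommGroup N] [Module R N] :
    IsShortExact R (LinearMap.inl R M N) (LinearMap.snd R M N) :=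
  ⟨LinearMap.inl_injective, LinearMap.snd_surjective, LinearMap.exact_iff.mp .inl_snd⟩

/-- A four lemma, for rows `M₁ → M₂ → M₃ → 0` mapping to `N₁ → N₂ → N₃ → 0`. -/
theorem LinearMap.surjective_of_surjective_of_surjective_of_exact {R : Type*} [CommRing R]
    {M₁ M₂ M₃ N₁ N₂ N₃ : Type*} [AddCommGroup M₁] [Module R M₁] [AddCommGroup M₂] [Module R M₂]
    [AddCommGroup M₃] [Module R M₃] [AddCommGroup N₁] [Module R N₁] [AddCommGroup N₂]
    [Module R N₂] [AddCommGroup N₃] [Module R N₃]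
    {f₁ : M₁ →ₗ[R] M₂} {f₂ : M₂ →ₗ[R] M₃} {g₁ : N₁ →ₗ[R] N₂} {g₂ : N₂ →ₗ[R] N₃}
    {i₁ : M₁ →ₗ[R] N₁} {i₂ : M₂ →ₗ[R] N₂} {i₃ : M₃ →ₗ[R] N₃}
    (hc₁ : g₁ ∘ₗ i₁ = i₂ ∘ₗ f₁) (hc₂ : g₂ ∘ₗ i₂ = i₃ ∘ₗ f₂)
    (hf₂ : Function.Surjective f₂) (hg : Function.Exact g₁ g₂) (hg₂ : Function.Surjective g₂)
    (hi₁ : Function.Surjective i₁) (hi₃ : Function.Surjective i₃) :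
    Function.Surjective i₂ :=
  surjective_of_surjective_of_surjective_of_injective f₁ f₂ (0 : M₃ →ₗ[R] Unit) g₁ g₂ 0
    i₁ i₂ i₃ (0 : Unit →ₗ[R] Unit) hc₁ hc₂ (by simp) ((exact_zero_iff_surjective _ _).mpr hf₂)
    hg ((exact_zero_iff_surjective _ _).mpr hg₂) hi₁ hi₃ (Function.injective_of_subsingleton _)

namespace FlatSESCover

variable {R : Type u} [CommRing R] {G' G G'' : Type u} [AddCommGroup G'] [Module R G']
  [AddCommGroup G] [Module R G] [AddCommGroup G''] [Module R G'']
  {iG : G' →ₗ[R] G} {pG : G →ₗ[R] G''}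
  {F' F'' : Type u} [AddCommGroup F'] [Module R F'] [AddCommGroup F''] [Module R F'']

/-- Covering by the split sequence `0 → F' → F' × F'' → F'' → 0`: the middle map is `iG ∘ φ'`
on `F'` and, on `F''`, a lift of `φ''` through `pG`, which exists because `F''` is projective. -/
noncomputable def ofProd [Module.Projective R F'] [Module.Projective R F'']
    (φ' : F' →ₗ[R] G') (φ'' : F'' →ₗ[R] G'')
    (hφ' : Function.Surjective φ') (hφ'' : Function.Surjective φ'')
    (hexact : Function.Exact iG pG) (hpG : Function.Surjective pG) :
    FlatSESCover R G' G G'' iG pG :=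
  let ψ := (Module.projective_lifting_property pG φ'' hpG).choose
  have hψ : pG ∘ₗ ψ = φ'' := (Module.projective_lifting_property pG φ'' hpG).choose_spec
  have comm_left : ((iG ∘ₗ φ').coprod ψ) ∘ₗ LinearMap.inl R F' F'' = iG ∘ₗ φ' :=
    LinearMap.coprod_inl _ _
  have comm_right : φ'' ∘ₗ LinearMap.snd R F' F'' = pG ∘ₗ (iG ∘ₗ φ').coprod ψ := by
    rw [LinearMap.comp_coprod, ← LinearMap.comp_assoc, hexact.linearMap_comp_eq_zero,
      LinearMap.zero_comp, hψ, LinearMap.coprod_zero_left]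
  { F' := F', F := F' × F'', F'' := F''
    i := LinearMap.inl R F' F''
    p := LinearMap.snd R F' F''
    ses := isShortExact_inl_snd F' F''
    flat' := inferInstance
    flat := inferInstance
    flat'' := inferInstance
    φ' := φ'
    φ := (iG ∘ₗ φ').coprod ψ
    φ'' := φ''
    comm_left := comm_left
    comm_right := comm_right
    surj_mid := LinearMap.surjective_of_surjective_of_surjective_of_exact comm_left.symm
      comm_right.symm LinearMap.snd_surjective hexact hpG hφ' hφ''
    surj_right := hφ'' }

end FlatSESCover

/-- every short exact sequence of modules can be covered by a short exact
sequence of flat modules, with surjective middle and right maps. -/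
theorem exists_flat_ses_cover (R : Type u) [CommRing R]
    (G' G G'' : Type u) [AddCommGroup G'] [Module R G'] [AddCommGroup G] [Module R G]
    [AddCommGroup G''] [Module R G'']
    (iG : G' →ₗ[R] G) (pG : G →ₗ[R] G'') (hse : IsShortExact R iG pG) :
    Nonempty (FlatSESCover R G' G G'' iG pG) :=
  ⟨.ofProd (Finsupp.linearCombination R id) (Finsupp.linearCombination R id)
    (Finsupp.linearCombination_id_surjective R G')
    (Finsupp.linearCombination_id_surjective R G'')
    (LinearMap.exact_iff.mpr hse.2.2) hse.2.1⟩
end
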